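/- arXiv:math/0204162 — 3 statements merged into one kernel-verified Lean document; each statement's English description precedes it below -/
import Mathlib

section
/- Let f = x(x² − y³)(x² − z·y³) in ℚ[x,y,z]. The determinant of the 3×3 matrix of coefficients of the logarithmic derivations δ₁ = (3/2)x·∂x + y·∂y, δ₂ = (y³z − x²)·∂z, δ₃ = (−(1/2)xy²)·∂x − (1/3)x²·∂y + (y²z² − y²z)·∂z, namely the matrix with rows ((3/2)x, y, 0), (0, 0, y³z − x²), (−(1/2)xy², −(1/3)x², y²z² − y²z), equals −(1/2)·f. (By Saito's criterion this witnesses that the divisor D = (f = 0) is free.) -/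
open MvPolynomial

noncomputable section

/-- The polynomial ring ℚ[x,y,z]. -/
abbrev R3 : Type := MvPolynomial (Fin 3) ℚ

def x : R3 := X 0
def y : R3 := X 1
def z : R3 := X 2

/-- f = x(x² − y³)(x² − z·y³). -/
def f : R3 := x * (x ^ 2 - y ^ 3) * (x ^ 2 - z * y ^ 3)

/-- The matrix of coefficients of the logarithmic derivations δ₁, δ₂, δ₃. -/
def A : Matrix (Fin 3) (Fin 3) R3 :=
  !![C (3/2 : ℚ) * x, y, 0;
     0, 0, y ^ 3 * z - x ^ 2;
     -(C (1/2 : ℚ) * x * y ^ 2), -(C (1/3 : ℚ) * x ^ 2),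
       y ^ 2 * z ^ 2 - y ^ 2 * z]

/-- Saito's determinant for the free divisor x(x² − y³)(x² − z·y³) = 0. -/
theorem saito_det : A.det = -(C (1/2 : ℚ)) * f := by
  have h32 : (C (3/2 : ℚ) : R3) = 9 * C (1/6 : ℚ) := by
    rw [show ((9:R3)) = C (9:ℚ) from (map_ofNat C 9).symm, ← C_mul]; norm_num
  have h13 : (C (1/3 : ℚ) : R3) = 2 * C (1/6 : ℚ) := by
    rw [show ((2:R3)) = C (2:ℚ) from (map_ofNat C 2).symm, ← C_mul]; norm_num
  have h12 : (C (1/2 : ℚ) : R3) = 3 * C (1/6 : ℚ) := by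
    rw [show ((3:R3)) = C (3:ℚ) from (map_ofNat C 3).symm, ← C_mul]; norm_num
  have hc : (6:R3) * C (1/6 : ℚ) = 1 := by
    rw [show ((6:R3)) = C (6:ℚ) from (map_ofNat C 6).symm, ← C_mul]; norm_num
  simp [A, f, Matrix.det_fin_three]
  rw [h32, show (C (3⁻¹:ℚ) : R3) = 2 * C (1/6 : ℚ) by
      rw [show ((2:R3)) = C (2:ℚ) from (map_ofNat C 2).symm, ← C_mul]; norm_num,
    show (C (2⁻¹:ℚ) : R3) = 3 * C (1/6 : ℚ) by
      rw [show ((3:R3)) = C (3:ℚ) from (map_ofNat C 3).symm, ← C_mul]; norm_num]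
  linear_combination (3 * C (1/6 : ℚ) * x ^ 3 * (y ^ 3 * z - x ^ 2)) * hc

end
end

section
/- In ℚ[x,y,z], the derivations δ₁ = (3/2)x·∂x + y·∂y and δ₃ = (−(1/2)xy²)·∂x − (1/3)x²·∂y + (y²z² − y²z)·∂z satisfy the commutator relation [δ₁, δ₃] = 2·δ₃. (This commutator relation yields the syzygy s₁₃ = (−δ₃, 0, δ₁ − 2) among the generators of the logarithmic ideal of the divisor x(x² − y³)(x² − z·y³) = 0.) -/
open MvPolynomial

noncomputable section

/-- δ₁ = (3/2)x·∂x + y·∂y. -/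
def δ₁ : Derivation ℚ R3 R3 := mkDerivation ℚ ![C (3/2 : ℚ) * x, y, 0]

/-- δ₂ = (y³z − x²)·∂z. -/
def δ₂ : Derivation ℚ R3 R3 := mkDerivation ℚ ![0, 0, y ^ 3 * z - x ^ 2]

/-- δ₃ = (−(1/2)xy²)·∂x − (1/3)x²·∂y + (y²z² − y²z)·∂z. -/
def δ₃ : Derivation ℚ R3 R3 :=
  mkDerivation ℚ
    ![-(C (1/2 : ℚ) * x * y ^ 2), -(C (1/3 : ℚ) * x ^ 2),
      y ^ 2 * z ^ 2 - y ^ 2 * z]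

private lemma C2R3 : (C (2:ℚ) : R3) = 2 := map_ofNat _ 2

/-- The commutator relation [δ₁, δ₃] = 2·δ₃. -/
theorem commutator_delta1_delta3 : ⁅δ₁, δ₃⁆ = (2 : ℚ) • δ₃ := by
  apply derivation_ext
  intro i
  fin_cases i <;>
    · simp [δ₁, δ₃, Derivation.commutator_apply, x, y, z, mkDerivation_X,
        Derivation.leibniz, smul_eq_C_mul]
      ring_nf
      try simp only [← C2R3]
      try simp only [mul_comm, mul_left_comm, mul_assoc, ← C_mul]
      try norm_num
      try (rw [show ((C (1/3:ℚ)):R3) = 1 - C (2/3:ℚ) by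
            rw [← C_1, ← C_sub]; norm_num]; ring)

end
end

section
/- In ℚ[x,y,z], the derivations δ₂ = (y³z − x²)·∂z and δ₃ = (−(1/2)xy²)·∂x − (1/3)x²·∂y + (y²z² − y²z)·∂z satisfy the commutator relation [δ₂, δ₃] = y²z·δ₂. (This commutator relation yields the syzygy s₂₃ = (0, −δ₃ − y²z, δ₂) among the generators of the logarithmic ideal of the divisor x(x² − y³)(x² − z·y³) = 0.) -/
open MvPolynomial

noncomputable section

/-- The commutator relation [δ₂, δ₃] = y²z·δ₂. -/
theorem commutator_delta2_delta3 : ⁅δ₂, δ₃⁆ = (y ^ 2 * z) • δ₂ := by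
  apply derivation_ext
  intro i
  have h2 : (C (1/2 : ℚ) : R3) * 2 = 1 := by
    rw [show (2:R3) = C 2 by rw [map_ofNat], ← C_mul]; norm_num
  have h3 : (C (1/3 : ℚ) : R3) * 3 = 1 := by
    rw [show (3:R3) = C 3 by rw [map_ofNat], ← C_mul]; norm_num
  fin_cases i <;>
    simp [δ₂, δ₃, x, y, z, Derivation.commutator_apply, mkDerivation_X] <;>
    ring_nf <;>
    simp only [mul_assoc, h2, h3] <;> ring

end
end
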